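/- Let E be a real normed vector space, let M ≥ 1, let F₁, …, F_M : E → ℝ be twice continuously differentiable, and let ρ₁, …, ρ_M ∈ ℝ. Define the MaxFL objective F̃(x) = (1/M)·Σₖ σ(Fₖ(x) − ρₖ), where σ(x) = 1/(1+exp(−x)). Fix w ∈ E and constants L_c, L_s ≥ 0 with ‖DFₖ(w)‖ ≤ L_c and ‖D²Fₖ(w)‖ ≤ L_s for every k. Then the second Fréchet derivative of F̃ at w satisfies ‖D²F̃(w)‖ ≤ (L_s/M)·Σₖ qₖ(w) + L_c²/4, where qₖ(w) = σ(Fₖ(w)−ρₖ)·(1−σ(Fₖ(w)−ρₖ)). -/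

import Mathlib

noncomputable def sigmoid (x : ℝ) : ℝ := 1 / (1 + Real.exp (-x))

/-!
By the chain rule, `D²(σ ∘ g)(w) = σ'(g w) • D²g(w) + σ''(g w) • Dg(w) ⊗ Dg(w)`, where
`σ' = σ (1 - σ)` is the MaxFL weight and `σ'' = σ (1 - σ) (1 - 2σ)` is bounded by `1/4` in
absolute value. Applied to `g = Fₖ - ρₖ` this bounds each summand's Hessian by
`qₖ(w) L_s + L_c² / 4`, and averaging over `k` gives the claim.
-/

open ContinuousLinearMap

theorem sigmoid_eq_real_sigmoid : sigmoid = Real.sigmoid :=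
  funext fun _ => one_div _

theorem Real.sigmoid_mul_one_sub_sigmoid_nonneg (x : ℝ) :
    0 ≤ Real.sigmoid x * (1 - Real.sigmoid x) :=
  mul_nonneg (Real.sigmoid_nonneg x) (sub_nonneg.mpr (Real.sigmoid_le_one x))

theorem Real.hasDerivAt_sigmoid_mul_one_sub_sigmoid (x : ℝ) :
    HasDerivAt (fun y => Real.sigmoid y * (1 - Real.sigmoid y))
      (Real.sigmoid x * (1 - Real.sigmoid x) * (1 - 2 * Real.sigmoid x)) x := by
  refine ((Real.hasDerivAt_sigmoid x).mul
    ((Real.hasDerivAt_sigmoid x).const_sub 1)).congr_deriv ?_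
  ring

theorem Real.abs_sigmoid_mul_one_sub_sigmoid_mul_one_sub_two_sigmoid_le (x : ℝ) :
    |Real.sigmoid x * (1 - Real.sigmoid x) * (1 - 2 * Real.sigmoid x)| ≤ 1 / 4 := by
  have hs₀ := Real.sigmoid_nonneg x
  have hs₁ := Real.sigmoid_le_one x
  rw [abs_mul, abs_of_nonneg (Real.sigmoid_mul_one_sub_sigmoid_nonneg x)]
  calc Real.sigmoid x * (1 - Real.sigmoid x) * |1 - 2 * Real.sigmoid x| ≤ 1 / 4 * 1 := by
        gcongr
        · nlinarith [sq_nonneg (1 - 2 * Real.sigmoid x)]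
        · exact abs_le.mpr ⟨by linarith, by linarith⟩
    _ = 1 / 4 := mul_one _

section SecondDerivative

variable {E : Type*} [NormedAddCommGroup E] [NormedSpace ℝ E]

theorem ContDiff.differentiable_fderiv_of_two {F : Type*} [NormedAddCommGroup F] [NormedSpace ℝ F]
    {f : E → F} (hf : ContDiff ℝ 2 f) :
    Differentiable ℝ (fderiv ℝ f) :=
  (hf.fderiv_right (m := 1) le_rfl).differentiable one_ne_zero

theorem hasFDerivAt_fderiv_comp_of_hasDerivAt {φ φ' : ℝ → ℝ} {φ'' : ℝ} {g : E → ℝ}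
    {g' : E → StrongDual ℝ E} {g'' : E →L[ℝ] StrongDual ℝ E} {w : E}
    (hφ : ∀ y, HasDerivAt φ (φ' y) y) (hφ' : HasDerivAt φ' φ'' (g w))
    (hg : ∀ x, HasFDerivAt g (g' x) x) (hg' : HasFDerivAt g' g'' w) :
    HasFDerivAt (fderiv ℝ fun x => φ (g x))
      (φ' (g w) • g'' + (φ'' • g' w).smulRight (g' w)) w := by
  have hD : fderiv ℝ (fun x => φ (g x)) = fun x => φ' (g x) • g' x :=
    funext fun x => ((hφ (g x)).comp_hasFDerivAt x (hg x)).fderiv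
  rw [hD]
  exact (hφ'.comp_hasFDerivAt w (hg w)).smul hg'

theorem norm_smul_add_smulRight_self_le (a b : ℝ) (B : E →L[ℝ] StrongDual ℝ E)
    (ℓ : StrongDual ℝ E) :
    ‖a • B + (b • ℓ).smulRight ℓ‖ ≤ |a| * ‖B‖ + |b| * ‖ℓ‖ ^ 2 := by
  calc ‖a • B + (b • ℓ).smulRight ℓ‖ ≤ ‖a • B‖ + ‖b • ℓ‖ * ‖ℓ‖ :=
        (norm_add_le (a • B) ((b • ℓ).smulRight ℓ)).trans_eq (by rw [norm_smulRight_apply])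
    _ ≤ |a| * ‖B‖ + |b| * ‖ℓ‖ * ‖ℓ‖ := by
        gcongr
        · exact opNorm_smul_le a B
        · exact opNorm_smul_le b ℓ
    _ = |a| * ‖B‖ + |b| * ‖ℓ‖ ^ 2 := by ring

theorem norm_fderiv_fderiv_sigmoid_comp_le {g : E → ℝ} (hg : ContDiff ℝ 2 g) (w : E) :
    ‖fderiv ℝ (fderiv ℝ fun x => Real.sigmoid (g x)) w‖ ≤
      Real.sigmoid (g w) * (1 - Real.sigmoid (g w)) * ‖fderiv ℝ (fderiv ℝ g) w‖
        + ‖fderiv ℝ g w‖ ^ 2 / 4 := by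
  have hD := hasFDerivAt_fderiv_comp_of_hasDerivAt Real.hasDerivAt_sigmoid
    (Real.hasDerivAt_sigmoid_mul_one_sub_sigmoid (g w))
    (fun x => (hg.differentiable two_ne_zero x).hasFDerivAt)
    (hg.differentiable_fderiv_of_two w).hasFDerivAt
  rw [hD.fderiv]
  refine (norm_smul_add_smulRight_self_le _ _ _ _).trans ?_
  rw [abs_of_nonneg (Real.sigmoid_mul_one_sub_sigmoid_nonneg _)]
  have hσ'' := Real.abs_sigmoid_mul_one_sub_sigmoid_mul_one_sub_two_sigmoid_le (g w)
  have hℓ := sq_nonneg ‖fderiv ℝ g w‖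
  linarith [mul_le_mul_of_nonneg_right hσ'' hℓ]

theorem norm_fderiv_fderiv_const_mul_sum_le {ι : Type*} [Fintype ι] {f : ι → E → ℝ}
    {c : ℝ} (hc : 0 ≤ c) (hf : ∀ k, ContDiff ℝ 2 (f k)) (w : E) :
    ‖fderiv ℝ (fderiv ℝ fun x => c * ∑ k, f k x) w‖ ≤
      c * ∑ k, ‖fderiv ℝ (fderiv ℝ (f k)) w‖ := by
  have hD : fderiv ℝ (fun x => c * ∑ k, f k x) = fun x => c • ∑ k, fderiv ℝ (f k) x :=
    funext fun x => ((HasFDerivAt.fun_sum fun k _ =>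
      ((hf k).differentiable two_ne_zero x).hasFDerivAt).const_mul c).fderiv
  have hD2 : HasFDerivAt (fun x => c • ∑ k, fderiv ℝ (f k) x)
      (c • ∑ k, fderiv ℝ (fderiv ℝ (f k)) w) w :=
    (HasFDerivAt.fun_sum fun k _ =>
      ((hf k).differentiable_fderiv_of_two w).hasFDerivAt).const_smul c
  rw [hD, hD2.fderiv]
  refine (opNorm_smul_le c _).trans ?_
  rw [Real.norm_of_nonneg hc]
  gcongr
  exact norm_sum_le _ _

end SecondDerivative

theorem maxfl_objective_smoothness_general
    {E : Type*} [NormedAddCommGroup E] [NormedSpace ℝ E]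
    (M : ℕ) (F : Fin M → E → ℝ) (ρ : Fin M → ℝ)
    (hF : ∀ k, ContDiff ℝ 2 (F k)) (w : E)
    (Lc Ls : ℝ)
    (h1 : ∀ k, ‖fderiv ℝ (F k) w‖ ≤ Lc)
    (h2 : ∀ k, ‖fderiv ℝ (fderiv ℝ (F k)) w‖ ≤ Ls) :
    ‖fderiv ℝ (fderiv ℝ (fun x => (1 / (M : ℝ)) * ∑ k, sigmoid (F k x - ρ k))) w‖
      ≤ (Ls / (M : ℝ)) * ∑ k, sigmoid (F k w - ρ k) * (1 - sigmoid (F k w - ρ k))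
        + Lc ^ 2 / 4 := by
  rw [sigmoid_eq_real_sigmoid]
  set q : Fin M → ℝ := fun k =>
    Real.sigmoid (F k w - ρ k) * (1 - Real.sigmoid (F k w - ρ k))
  have hF_sub : ∀ k, ContDiff ℝ 2 fun x => F k x - ρ k := fun k => (hF k).sub contDiff_const
  have hfderiv_sub : ∀ k, fderiv ℝ (fun x => F k x - ρ k) = fderiv ℝ (F k) :=
    fun k => funext fun x => fderiv_sub_const (ρ k)
  have hterm : ∀ k, ‖fderiv ℝ (fderiv ℝ fun x => Real.sigmoid (F k x - ρ k)) w‖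
      ≤ q k * Ls + Lc ^ 2 / 4 := by
    intro k
    refine (norm_fderiv_fderiv_sigmoid_comp_le (hF_sub k) w).trans ?_
    rw [hfderiv_sub]
    gcongr
    · exact Real.sigmoid_mul_one_sub_sigmoid_nonneg _
    · exact h2 k
    · exact h1 k
  calc _ ≤ 1 / (M : ℝ) *
          ∑ k, ‖fderiv ℝ (fderiv ℝ fun x => Real.sigmoid (F k x - ρ k)) w‖ :=
        norm_fderiv_fderiv_const_mul_sum_le (by positivity)
          (fun k => ((contDiff_sigmoid.of_le le_top).comp (hF_sub k))) w
    _ ≤ 1 / (M : ℝ) * ∑ k, (q k * Ls + Lc ^ 2 / 4) := by gcongr with k; exact hterm k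
    _ = Ls / M * ∑ k, q k + M / M * (Lc ^ 2 / 4) := by
        rw [Finset.sum_add_distrib, ← Finset.sum_mul, Finset.sum_const, Finset.card_univ,
          Fintype.card_fin, nsmul_eq_mul]
        ring
    _ ≤ Ls / M * ∑ k, q k + Lc ^ 2 / 4 := by
        gcongr
        exact mul_le_of_le_one_left (by positivity) (div_self_le_one _)

theorem maxfl_objective_smoothness
    {E : Type*} [NormedAddCommGroup E] [NormedSpace ℝ E]
    (M : ℕ) (hM : 1 ≤ M) (F : Fin M → E → ℝ) (ρ : Fin M → ℝ)
    (hF : ∀ k, ContDiff ℝ 2 (F k)) (w : E)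
    (Lc Ls : ℝ) (hLc : 0 ≤ Lc) (hLs : 0 ≤ Ls)
    (h1 : ∀ k, ‖fderiv ℝ (F k) w‖ ≤ Lc)
    (h2 : ∀ k, ‖fderiv ℝ (fderiv ℝ (F k)) w‖ ≤ Ls) :
    ‖fderiv ℝ (fderiv ℝ (fun x => (1 / (M : ℝ)) * ∑ k, sigmoid (F k x - ρ k))) w‖
      ≤ (Ls / (M : ℝ)) * ∑ k, sigmoid (F k w - ρ k) * (1 - sigmoid (F k w - ρ k))
        + Lc ^ 2 / 4 :=
  maxfl_objective_smoothness_general M F ρ hF w Lc Ls h1 h2
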